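/- Let α ∈ (0,1), d, d_w > 0, d_J > 1, L > 1, and let c_1, c_2, c_3, c_4, c_6, C_η, A, A' > 0 be constants. Then there exist constants B_1, B_2 > 0 depending only on these constants (and not on M, t, r) such that the following holds: for every nonnegative integer M, every t with 0 < t < L^{α M d_w}, every r ∈ (0, L^M], and all measurable functions η, G : (0,∞) → [0,∞) satisfying (i) η(u) ≤ C_η·t·u^{−1−α} for all u > 0; (ii) c_1·f_{c_2}(s,r) ≤ G(s) for all s > 0, G(s) ≤ c_3·f_{c_4}(s,r) for 0 < s < L^{M d_w}, and G(s) ≤ c_6·L^{−Md} for s ≥ L^{M d_w}; (iii) A·q(t,r) ≤ ∫_0^∞ f_{c_2}(s,r)·η(s) ds and ∫_0^∞ f_{c_4}(s,r)·η(s) ds ≤ A'·q(t,r); one has B_1·q(t,r) ≤ ∫_0^∞ G(s)·η(s) ds ≤ B_2·q(t,r). -/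

import Mathlib

open MeasureTheory Set

/-- The subgaussian profile `f_c(t,r) = t^{-d/d_w} exp(-c (r / t^{1/d_w})^{d_w/(d_J-1)})`. -/
noncomputable def fprof (d dw dJ c t r : ℝ) : ℝ :=
  t ^ (-(d / dw)) * Real.exp (-c * (r / t ^ (1 / dw)) ^ (dw / (dJ - 1)))

/-- The stable heat-kernel profile
`q(t,r) = t^{-d/(α d_w)} · min((t^{1/(α d_w)}/r)^{d+α d_w}, 1)`. -/
noncomputable def qprof (d dw α t r : ℝ) : ℝ :=
  t ^ (-(d / (α * dw))) * min ((t ^ (1 / (α * dw)) / r) ^ (d + α * dw)) 1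

/-!
The lower bound holds under the integral sign, since `G ≥ c₁ f_{c₂}`. For the upper bound the
`s`-integral is split at `T = L^{M d_w}`. Below `T`, `G ≤ c₃ f_{c₄}` and (iii) applies. Above `T`,
`G ≤ c₆ L^{-Md}` and `η(s) ≤ C_η t s^{-1-α}` integrate to `c₆ C_η α⁻¹ t L^{-M(d + α d_w)}`, which is
at most `c₆ C_η α⁻¹ q(t,r)` because `r ≤ L^M` and `t < L^{α M d_w}`.
Integrability near `s = 0` comes from `exp (-w) ≤ (p / w)^p`, which makes
`f_c(s,r) = O(s^{1+α})` and so compensates the singularity of `η`.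
-/

lemma Real.exp_neg_le_div_rpow {w p : ℝ} (hw : 0 < w) (hp : 0 < p) :
    Real.exp (-w) ≤ (p / w) ^ p := by
  have hwp : 0 < w / p := div_pos hw hp
  have h : Real.exp (-(w / p)) ≤ p / w :=
    calc Real.exp (-(w / p)) = (Real.exp (w / p))⁻¹ := Real.exp_neg _
      _ ≤ (w / p)⁻¹ := inv_anti₀ hwp (by linarith [Real.add_one_le_exp (w / p)])
      _ = p / w := inv_div _ _
  calc Real.exp (-w) = Real.exp (-(w / p)) ^ p := by
        rw [← Real.exp_mul]; congr 1; field_simp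
    _ ≤ (p / w) ^ p := Real.rpow_le_rpow (Real.exp_nonneg _) h hp.le

section Profiles

variable {d dw dJ : ℝ}

lemma fprof_nonneg (c : ℝ) {s : ℝ} (hs : 0 < s) (r : ℝ) : 0 ≤ fprof d dw dJ c s r := by
  unfold fprof; positivity

lemma measurable_fprof (c r : ℝ) : Measurable fun s => fprof d dw dJ c s r := by
  unfold fprof; fun_prop

lemma fprof_le_rpow {c s r : ℝ} (hc : 0 ≤ c) (hs : 0 < s) (hr : 0 ≤ r) :
    fprof d dw dJ c s r ≤ s ^ (-(d / dw)) := by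
  refine mul_le_of_le_one_right (by positivity) (Real.exp_le_one_iff.2 ?_)
  have : 0 ≤ (r / s ^ (1 / dw)) ^ (dw / (dJ - 1)) := by positivity
  nlinarith

lemma exists_fprof_le_mul_rpow (hdw : 0 < dw) (hdJ : 1 < dJ) {c r γ : ℝ} (hc : 0 < c)
    (hr : 0 < r) (hγ : 0 < d + γ * dw) :
    ∃ K, ∀ s, 0 < s → fprof d dw dJ c s r ≤ K * s ^ γ := by
  set β := dw / (dJ - 1)
  have hβ : 0 < β := div_pos hdw (by linarith)
  set p := (d + γ * dw) / β
  have hp : 0 < p := div_pos hγ hβ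
  refine ⟨(p / (c * r ^ β)) ^ p, fun s hs => ?_⟩
  have hw : (r / s ^ (1 / dw)) ^ β = r ^ β * s ^ (-(β / dw)) := by
    rw [Real.div_rpow hr.le (by positivity), ← Real.rpow_mul hs.le, div_eq_mul_inv,
      ← Real.rpow_neg hs.le]
    ring_nf
  have hpw : (p / (c * (r / s ^ (1 / dw)) ^ β)) ^ p
      = (p / (c * r ^ β)) ^ p * s ^ (β / dw * p) := by
    rw [hw, ← mul_assoc, div_mul_eq_div_div, div_eq_mul_inv _ (s ^ _), ← Real.rpow_neg hs.le,
      neg_neg, Real.mul_rpow (by positivity) (by positivity), ← Real.rpow_mul hs.le]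
  have hexp : -(d / dw) + β / dw * p = γ := by
    simp only [p]; field_simp; ring
  calc fprof d dw dJ c s r
      = s ^ (-(d / dw)) * Real.exp (-(c * (r / s ^ (1 / dw)) ^ β)) := by rw [fprof, neg_mul]
    _ ≤ s ^ (-(d / dw)) * (p / (c * (r / s ^ (1 / dw)) ^ β)) ^ p := by
        gcongr; exact Real.exp_neg_le_div_rpow (by positivity) hp
    _ = (p / (c * r ^ β)) ^ p * s ^ γ := by
        rw [hpw, ← hexp, Real.rpow_add hs]; ring

lemma qprof_eq_min {α t r : ℝ} (hαdw : α * dw ≠ 0) (ht : 0 < t) (hr : 0 < r) :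
    qprof d dw α t r = min (t * r ^ (-(d + α * dw))) (t ^ (-(d / (α * dw)))) := by
  rw [qprof, mul_min_of_nonneg _ _ (by positivity), mul_one,
    Real.div_rpow (by positivity) hr.le, ← Real.rpow_mul ht.le, div_eq_mul_inv _ (r ^ _),
    ← Real.rpow_neg hr.le, ← mul_assoc, ← Real.rpow_add ht]
  have hexp : -(d / (α * dw)) + 1 / (α * dw) * (d + α * dw) = 1 := by
    generalize α * dw = a at hαdw ⊢; field_simp; ring
  rw [hexp, Real.rpow_one]

lemma mul_rpow_neg_le_qprof (hd : 0 < d) (hdw : 0 < dw) {α t r R : ℝ} (hα : 0 < α)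
    (ht : 0 < t) (htR : t ≤ R ^ (α * dw)) (hr : 0 < r) (hrR : r ≤ R) :
    t * R ^ (-(d + α * dw)) ≤ qprof d dw α t r := by
  have hR : 0 < R := hr.trans_le hrR
  have hαdw : 0 < α * dw := by positivity
  rw [qprof_eq_min hαdw.ne' ht hr]
  refine le_min ?_ ?_
  · exact mul_le_mul_of_nonneg_left (Real.rpow_le_rpow_of_nonpos hr hrR (by linarith)) ht.le
  · have key : t ^ (1 + d / (α * dw)) ≤ R ^ (d + α * dw) :=
      calc t ^ (1 + d / (α * dw)) ≤ (R ^ (α * dw)) ^ (1 + d / (α * dw)) := by gcongr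
        _ = R ^ (d + α * dw) := by
          rw [← Real.rpow_mul hR.le]; congr 1; field_simp; ring
    rw [Real.rpow_add ht, Real.rpow_one] at key
    rw [Real.rpow_neg hR.le, Real.rpow_neg ht.le, ← div_eq_mul_inv,
      div_le_iff₀ (by positivity), le_inv_mul_iff₀ (by positivity)]
    linarith

lemma rpow_mul_rpow_mul_le_qprof (hd : 0 < d) (hdw : 0 < dw) {α t r L M : ℝ} (hα : 0 < α)
    (hL : 0 < L) (ht : 0 < t) (htL : t < L ^ (α * M * dw)) (hr : 0 < r) (hrL : r ≤ L ^ M) :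
    L ^ (-(M * d)) * (L ^ (M * dw)) ^ (-α) * t ≤ qprof d dw α t r := by
  have hLM : ∀ x, L ^ (M * x) = (L ^ M) ^ x := fun x => Real.rpow_mul hL.le _ _
  have hpow : L ^ (-(M * d)) * (L ^ (M * dw)) ^ (-α) = (L ^ M) ^ (-(d + α * dw)) := by
    rw [← Real.rpow_mul hL.le, ← Real.rpow_add hL, ← hLM]; ring_nf
  rw [hpow, mul_comm]
  refine mul_rpow_neg_le_qprof hd hdw hα ht ?_ hr hrL
  rw [← hLM, show M * (α * dw) = α * M * dw by ring]
  exact htL.le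

end Profiles

section TailIntegrals

variable {F : ℝ → ℝ} {T K α : ℝ}

lemma integrableOn_Ici_const_mul_rpow (hT : 0 < T) (hα : 0 < α) :
    IntegrableOn (fun s => K * s ^ (-1 - α)) (Ici T) :=
  (integrableOn_Ici_iff_integrableOn_Ioi).2
    ((integrableOn_Ioi_rpow_of_lt (by linarith) hT).const_mul K)

lemma integrableOn_Ici_of_le_rpow (hT : 0 < T) (hα : 0 < α) (hF : Measurable F)
    (hF0 : ∀ s ∈ Ici T, 0 ≤ F s) (hFT : ∀ s ∈ Ici T, F s ≤ K * s ^ (-1 - α)) :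
    IntegrableOn F (Ici T) := by
  refine Integrable.mono' (integrableOn_Ici_const_mul_rpow (K := K) hT hα)
    hF.aestronglyMeasurable (ae_restrict_of_forall_mem measurableSet_Ici fun s hs => ?_)
  rw [Real.norm_of_nonneg (hF0 s hs)]
  exact hFT s hs

lemma setIntegral_Ici_le_of_le_rpow (hT : 0 < T) (hα : 0 < α)
    (hF0 : ∀ s ∈ Ici T, 0 ≤ F s) (hFT : ∀ s ∈ Ici T, F s ≤ K * s ^ (-1 - α)) :
    ∫ s in Ici T, F s ≤ K * T ^ (-α) / α := by
  calc ∫ s in Ici T, F s ≤ ∫ s in Ici T, K * s ^ (-1 - α) :=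
        integral_mono_of_nonneg (ae_restrict_of_forall_mem measurableSet_Ici hF0)
          (integrableOn_Ici_const_mul_rpow hT hα)
          (ae_restrict_of_forall_mem measurableSet_Ici hFT)
    _ = K * T ^ (-α) / α := by
        rw [integral_const_mul, integral_Ici_eq_integral_Ioi,
          integral_Ioi_rpow_of_lt (by linarith) hT, show -1 - α + 1 = -α by ring,
          neg_div_neg_eq, mul_div_assoc]

variable {G g η : ℝ → ℝ} {C D : ℝ}

lemma mul_le_mul_rpow_of_le (hT : 0 < T) (hG0 : ∀ s, 0 < s → 0 ≤ G s)
    (hη0 : ∀ s, 0 < s → 0 ≤ η s) (hηC : ∀ s, 0 < s → η s ≤ C * s ^ (-1 - α))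
    (hGD : ∀ s, T ≤ s → G s ≤ D) : ∀ s ∈ Ici T, G s * η s ≤ D * C * s ^ (-1 - α) := by
  intro s hs
  have hs0 : 0 < s := hT.trans_le hs
  have hD : 0 ≤ D := (hG0 T hT).trans (hGD T le_rfl)
  rw [mul_assoc]
  exact mul_le_mul (hGD s hs) (hηC s hs0) (hη0 s hs0) hD

lemma integrableOn_Ioi_mul_of_le (hT : 0 < T) (hα : 0 < α) (hG : Measurable G)
    (hη : Measurable η)
    (hG0 : ∀ s, 0 < s → 0 ≤ G s) (hη0 : ∀ s, 0 < s → 0 ≤ η s)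
    (hηC : ∀ s, 0 < s → η s ≤ C * s ^ (-1 - α)) (hg : IntegrableOn (fun s => g s * η s) (Ioi 0))
    (hGg : ∀ s, 0 < s → s < T → G s ≤ g s) (hGD : ∀ s, T ≤ s → G s ≤ D) :
    IntegrableOn (fun s => G s * η s) (Ioi 0) := by
  rw [← Ioo_union_Ici_eq_Ioi hT]
  refine IntegrableOn.union ?_ (integrableOn_Ici_of_le_rpow hT hα (hG.mul hη)
    (fun s hs => mul_nonneg (hG0 s (hT.trans_le hs)) (hη0 s (hT.trans_le hs)))
    (mul_le_mul_rpow_of_le hT hG0 hη0 hηC hGD))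
  refine Integrable.mono' (hg.mono_set Ioo_subset_Ioi_self) (hG.mul hη).aestronglyMeasurable
    (ae_restrict_of_forall_mem measurableSet_Ioo fun s hs => ?_)
  rw [Real.norm_of_nonneg (mul_nonneg (hG0 s hs.1) (hη0 s hs.1))]
  exact mul_le_mul_of_nonneg_right (hGg s hs.1 hs.2) (hη0 s hs.1)

lemma setIntegral_Ioi_mul_le (hT : 0 < T) (hα : 0 < α) (hG : Measurable G) (hη : Measurable η)
    (hG0 : ∀ s, 0 < s → 0 ≤ G s) (hη0 : ∀ s, 0 < s → 0 ≤ η s)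
    (hηC : ∀ s, 0 < s → η s ≤ C * s ^ (-1 - α)) (hg : IntegrableOn (fun s => g s * η s) (Ioi 0))
    (hg0 : ∀ s, 0 < s → 0 ≤ g s) (hGg : ∀ s, 0 < s → s < T → G s ≤ g s)
    (hGD : ∀ s, T ≤ s → G s ≤ D) :
    ∫ s in Ioi 0, G s * η s ≤ (∫ s in Ioi 0, g s * η s) + D * C * T ^ (-α) / α := by
  have hint := integrableOn_Ioi_mul_of_le hT hα hG hη hG0 hη0 hηC hg hGg hGD
  rw [← Ioo_union_Ici_eq_Ioi hT] at hint
  calc ∫ s in Ioi 0, G s * η s = (∫ s in Ioo 0 T, G s * η s) + ∫ s in Ici T, G s * η s := by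
        rw [← Ioo_union_Ici_eq_Ioi hT, setIntegral_union
          ((Iio_disjoint_Ici le_rfl).mono_left Ioo_subset_Iio_self) measurableSet_Ici
          (hint.mono_set subset_union_left) (hint.mono_set subset_union_right)]
    _ ≤ (∫ s in Ioo 0 T, g s * η s) + D * C * T ^ (-α) / α :=
        add_le_add (integral_mono_of_nonneg (ae_restrict_of_forall_mem measurableSet_Ioo
            fun s hs => mul_nonneg (hG0 s hs.1) (hη0 s hs.1)) (hg.mono_set Ioo_subset_Ioi_self)
            (ae_restrict_of_forall_mem measurableSet_Ioo fun s hs =>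
              mul_le_mul_of_nonneg_right (hGg s hs.1 hs.2) (hη0 s hs.1)))
          (setIntegral_Ici_le_of_le_rpow hT hα
            (fun s hs => mul_nonneg (hG0 s (hT.trans_le hs)) (hη0 s (hT.trans_le hs)))
            (mul_le_mul_rpow_of_le hT hG0 hη0 hηC hGD))
    _ ≤ (∫ s in Ioi 0, g s * η s) + D * C * T ^ (-α) / α :=
        add_le_add_left (setIntegral_mono_set hg (ae_restrict_of_forall_mem measurableSet_Ioi
          fun s hs => mul_nonneg (hg0 s hs) (hη0 s hs)) Ioo_subset_Ioi_self.eventuallyLE) _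

end TailIntegrals

lemma integrableOn_fprof_mul {d dw dJ α c r C : ℝ} {η : ℝ → ℝ} (hd : 0 < d) (hdw : 0 < dw)
    (hdJ : 1 < dJ) (hα : 0 < α) (hc : 0 < c) (hr : 0 < r) (hη : Measurable η)
    (hη0 : ∀ u, 0 < u → 0 ≤ η u) (hηC : ∀ u, 0 < u → η u ≤ C * u ^ (-1 - α)) :
    IntegrableOn (fun s => fprof d dw dJ c s r * η s) (Ioi 0) := by
  have hmeas : Measurable fun s => fprof d dw dJ c s r * η s := (measurable_fprof c r).mul hη
  have hnonneg : ∀ s, 0 < s → 0 ≤ fprof d dw dJ c s r * η s :=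
    fun s hs => mul_nonneg (fprof_nonneg c hs r) (hη0 s hs)
  obtain ⟨K, hK⟩ := exists_fprof_le_mul_rpow (γ := 1 + α) hdw hdJ hc hr (by positivity)
  have hbdd : ∀ s, 0 < s → fprof d dw dJ c s r * η s ≤ K * C := fun s hs =>
    calc fprof d dw dJ c s r * η s ≤ K * s ^ (1 + α) * (C * s ^ (-1 - α)) :=
          mul_le_mul (hK s hs) (hηC s hs) (hη0 s hs) ((fprof_nonneg c hs r).trans (hK s hs))
      _ = K * C := by
          rw [mul_mul_mul_comm, mul_assoc, ← Real.rpow_add hs]; norm_num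
  have htail : ∀ s ∈ Ici (1 : ℝ), fprof d dw dJ c s r * η s ≤ C * s ^ (-1 - α) := by
    intro s hs
    have hs0 : (0 : ℝ) < s := zero_lt_one.trans_le hs
    have hf : fprof d dw dJ c s r ≤ 1 := (fprof_le_rpow hc.le hs0 hr.le).trans
      (Real.rpow_le_one_of_one_le_of_nonpos hs (by have := div_pos hd hdw; linarith))
    exact (mul_le_of_le_one_left (hη0 s hs0) hf).trans (hηC s hs0)
  rw [← Ioo_union_Ici_eq_Ioi zero_lt_one]
  refine IntegrableOn.union (Measure.integrableOn_of_bounded (M := K * C) measure_Ioo_lt_top.ne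
    hmeas.aestronglyMeasurable (ae_restrict_of_forall_mem measurableSet_Ioo fun s hs => ?_))
    (integrableOn_Ici_of_le_rpow zero_lt_one hα hmeas
      (fun s hs => hnonneg s (zero_lt_one.trans_le hs)) htail)
  rw [Real.norm_of_nonneg (hnonneg s hs.1)]
  exact hbdd s hs.1

theorem stmt6_general (d dw dJ α L c1 c2 c3 c4 c6 Cη A A' : ℝ)
    (hd : 0 < d) (hdw : 0 < dw) (hdJ : 1 < dJ)
    (hα0 : 0 < α) (hL : 1 < L)
    (hc1 : 0 < c1) (hc3 : 0 < c3) (hc4 : 0 < c4) (hc6 : 0 < c6)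
    (hCη : 0 < Cη) (hA : 0 < A) (hA' : 0 < A') :
    ∃ B1 B2 : ℝ, 0 < B1 ∧ 0 < B2 ∧
      ∀ M : ℕ, ∀ t : ℝ, 0 < t → t < L ^ (α * (M : ℝ) * dw) →
      ∀ r : ℝ, 0 < r → r ≤ L ^ (M : ℝ) →
      ∀ η G : ℝ → ℝ, Measurable η → Measurable G →
        (∀ u, 0 < u → 0 ≤ η u) → (∀ s, 0 < s → 0 ≤ G s) →
        (∀ u, 0 < u → η u ≤ Cη * t * u ^ (-1 - α)) →
        (∀ s, 0 < s → c1 * fprof d dw dJ c2 s r ≤ G s) →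
        (∀ s, 0 < s → s < L ^ ((M : ℝ) * dw) → G s ≤ c3 * fprof d dw dJ c4 s r) →
        (∀ s, L ^ ((M : ℝ) * dw) ≤ s → G s ≤ c6 * L ^ (-((M : ℝ) * d))) →
        (A * qprof d dw α t r ≤ ∫ s in Ioi (0 : ℝ), fprof d dw dJ c2 s r * η s) →
        ((∫ s in Ioi (0 : ℝ), fprof d dw dJ c4 s r * η s) ≤ A' * qprof d dw α t r) →
        B1 * qprof d dw α t r ≤ (∫ s in Ioi (0 : ℝ), G s * η s) ∧
          (∫ s in Ioi (0 : ℝ), G s * η s) ≤ B2 * qprof d dw α t r := by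
  refine ⟨c1 * A, c3 * A' + c6 * Cη / α, by positivity, by positivity, ?_⟩
  intro M t ht htT r hr hrR η G hη hG hη0 hG0 hηC hGlow hGup hGtail hlow hup
  have hL0 : 0 < L := by linarith
  have hT : 0 < L ^ ((M : ℝ) * dw) := by positivity
  have hcfη : IntegrableOn (fun s => c3 * fprof d dw dJ c4 s r * η s) (Ioi 0) := by
    simp only [mul_assoc]
    exact (integrableOn_fprof_mul hd hdw hdJ hα0 hc4 hr hη hη0 hηC).const_mul c3
  constructor
  · calc c1 * A * qprof d dw α t r
        ≤ c1 * ∫ s in Ioi 0, fprof d dw dJ c2 s r * η s := by rw [mul_assoc]; gcongr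
      _ = ∫ s in Ioi 0, c1 * fprof d dw dJ c2 s r * η s := by
          rw [← integral_const_mul]; simp only [mul_assoc]
      _ ≤ ∫ s in Ioi 0, G s * η s :=
          integral_mono_of_nonneg
            (ae_restrict_of_forall_mem measurableSet_Ioi fun s hs =>
              mul_nonneg (mul_nonneg hc1.le (fprof_nonneg c2 hs r)) (hη0 s hs))
            (integrableOn_Ioi_mul_of_le hT hα0 hG hη hG0 hη0 hηC hcfη hGup hGtail)
            (ae_restrict_of_forall_mem measurableSet_Ioi fun s hs =>
              mul_le_mul_of_nonneg_right (hGlow s hs) (hη0 s hs))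
  · calc ∫ s in Ioi 0, G s * η s
        ≤ (∫ s in Ioi 0, c3 * fprof d dw dJ c4 s r * η s)
            + c6 * L ^ (-((M : ℝ) * d)) * (Cη * t) * (L ^ ((M : ℝ) * dw)) ^ (-α) / α :=
          setIntegral_Ioi_mul_le hT hα0 hG hη hG0 hη0 hηC hcfη
            (fun s hs => mul_nonneg hc3.le (fprof_nonneg c4 hs r)) hGup hGtail
      _ = c3 * (∫ s in Ioi 0, fprof d dw dJ c4 s r * η s) + c6 * Cη / α *
            (L ^ (-((M : ℝ) * d)) * (L ^ ((M : ℝ) * dw)) ^ (-α) * t) := by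
          simp only [mul_assoc c3]; rw [integral_const_mul]; ring
      _ ≤ c3 * (A' * qprof d dw α t r) + c6 * Cη / α * qprof d dw α t r := by
          gcongr
          exact rpow_mul_rpow_mul_le_qprof hd hdw hα0 hL0 ht htT hr hrR
      _ = (c3 * A' + c6 * Cη / α) * qprof d dw α t r := by ring

/-- small-time (`t < L^{α M d_w}`) two-sided estimate of Theorem 3.1:
under the two-sided subgaussian bounds on `G` and the stable-subordination
estimates (iii), one has `B₁ q(t,r) ≤ ∫_0^∞ G(s) η(s) ds ≤ B₂ q(t,r)` with
`B₁, B₂` independent of `M, t, r`. -/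
theorem stmt6 (d dw dJ α L c1 c2 c3 c4 c6 Cη A A' : ℝ)
    (hd : 0 < d) (hdw : 0 < dw) (hdJ : 1 < dJ)
    (hα0 : 0 < α) (hα1 : α < 1) (hL : 1 < L)
    (hc1 : 0 < c1) (hc2 : 0 < c2) (hc3 : 0 < c3) (hc4 : 0 < c4) (hc6 : 0 < c6)
    (hCη : 0 < Cη) (hA : 0 < A) (hA' : 0 < A') :
    ∃ B1 B2 : ℝ, 0 < B1 ∧ 0 < B2 ∧
      ∀ M : ℕ, ∀ t : ℝ, 0 < t → t < L ^ (α * (M : ℝ) * dw) →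
      ∀ r : ℝ, 0 < r → r ≤ L ^ (M : ℝ) →
      ∀ η G : ℝ → ℝ, Measurable η → Measurable G →
        (∀ u, 0 < u → 0 ≤ η u) → (∀ s, 0 < s → 0 ≤ G s) →
        (∀ u, 0 < u → η u ≤ Cη * t * u ^ (-1 - α)) →
        (∀ s, 0 < s → c1 * fprof d dw dJ c2 s r ≤ G s) →
        (∀ s, 0 < s → s < L ^ ((M : ℝ) * dw) → G s ≤ c3 * fprof d dw dJ c4 s r) →
        (∀ s, L ^ ((M : ℝ) * dw) ≤ s → G s ≤ c6 * L ^ (-((M : ℝ) * d))) →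
        (A * qprof d dw α t r ≤ ∫ s in Ioi (0 : ℝ), fprof d dw dJ c2 s r * η s) →
        ((∫ s in Ioi (0 : ℝ), fprof d dw dJ c4 s r * η s) ≤ A' * qprof d dw α t r) →
        B1 * qprof d dw α t r ≤ (∫ s in Ioi (0 : ℝ), G s * η s) ∧
          (∫ s in Ioi (0 : ℝ), G s * η s) ≤ B2 * qprof d dw α t r :=
  stmt6_general d dw dJ α L c1 c2 c3 c4 c6 Cη A A' hd hdw hdJ hα0 hL hc1 hc3 hc4 hc6 hCη hA hA'
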